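/- arXiv:0901.1561 — 3 statements merged into one kernel-verified Lean document; each statement's English description precedes it below -/
import Mathlib

section
/- Let L be a real (n-2)×(n-2) matrix with symmetric part S = (L + Lᵀ)/2, expansion θ = tr(L)/(n-2) ≠ 0, satisfying the optical constraint L Lᵀ = (tr(L Lᵀ)/((n-2)θ)) · S. Then L is a normal matrix, i.e. L Lᵀ = Lᵀ L. -/
open Matrix

/-- If an (n-2)×(n-2) real matrix `L` with nonzero expansion
`θ = tr L / (n-2)` satisfies the optical constraint
`L Lᵀ = (tr(L Lᵀ)/((n-2)θ)) • S` with `S = (L + Lᵀ)/2`, then `L` is normal. -/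
theorem optical_constraint_normal {n : ℕ} (hn : 4 ≤ n)
    (L : Matrix (Fin (n - 2)) (Fin (n - 2)) ℝ)
    (S : Matrix (Fin (n - 2)) (Fin (n - 2)) ℝ) (hS : S = (1 / 2 : ℝ) • (L + Lᵀ))
    (θ : ℝ) (hθdef : θ = Matrix.trace L / ((n : ℝ) - 2)) (hθ : θ ≠ 0)
    (hopt : L * Lᵀ = (Matrix.trace (L * Lᵀ) / (((n : ℝ) - 2) * θ)) • S) :
    L * Lᵀ = Lᵀ * L := by
  set c : ℝ := Matrix.trace (L * Lᵀ) / (((n : ℝ) - 2) * θ) with hc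
  set k : ℝ := c / 2 with hk
  have hL : L * Lᵀ = k • L + k • Lᵀ := by
    rw [hopt, hS, smul_smul, smul_add, hk]
    rw [show c * (1/2) = c / 2 by ring]
  by_cases hc0 : c = 0
  · -- then L * Lᵀ = 0, so L = 0
    have h0 : L * Lᵀ = 0 := by rw [hL, hk, hc0]; simp
    have hLH : L * Lᴴ = 0 := by
      have : Lᴴ = Lᵀ := by ext i j; simp [Matrix.conjTranspose_apply]
      rw [this]; exact h0
    have hL0 : L = 0 := Matrix.self_mul_conjTranspose_eq_zero.mp hLH
    simp [hL0]
  · have hk0 : k ≠ 0 := by simp [hk, hc0]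
    have e1 : (L - k • (1 : Matrix (Fin (n-2)) (Fin (n-2)) ℝ)) * (Lᵀ - k • 1)
        = L * Lᵀ - k • L - k • Lᵀ + (k * k) • 1 := by
      simp only [Matrix.sub_mul, Matrix.mul_sub, Matrix.smul_mul, Matrix.mul_smul,
        Matrix.mul_one, Matrix.one_mul, smul_smul]
      module
    have e2 : (Lᵀ - k • (1 : Matrix (Fin (n-2)) (Fin (n-2)) ℝ)) * (L - k • 1)
        = Lᵀ * L - k • L - k • Lᵀ + (k * k) • 1 := by
      simp only [Matrix.sub_mul, Matrix.mul_sub, Matrix.smul_mul, Matrix.mul_smul,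
        Matrix.mul_one, Matrix.one_mul, smul_smul]
      module
    have h1 : (L - k • (1 : Matrix (Fin (n-2)) (Fin (n-2)) ℝ)) * (Lᵀ - k • 1)
        = (k * k) • 1 := by
      rw [e1, hL]; module
    have h2 : (L - k • (1 : Matrix (Fin (n-2)) (Fin (n-2)) ℝ)) *
        ((1 / (k * k)) • (Lᵀ - k • 1)) = 1 := by
      rw [Matrix.mul_smul, h1, smul_smul]
      have : (1 / (k * k)) * (k * k) = 1 := by field_simp
      rw [this, one_smul]
    have h3 := mul_eq_one_comm.mp h2
    have h4 : (Lᵀ - k • (1 : Matrix (Fin (n-2)) (Fin (n-2)) ℝ)) * (L - k • 1)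
        = (k * k) • 1 := by
      have h3' : ((1 / (k * k)) • ((Lᵀ - k • (1 : Matrix (Fin (n-2)) (Fin (n-2)) ℝ)) * (L - k • 1))) = 1 := by
        rw [← Matrix.smul_mul]; exact h3
      have := congrArg (fun M => (k * k) • M) h3'
      simp only [smul_smul] at this
      have hkk : (k * k) * (1 / (k * k)) = 1 := by field_simp
      rw [hkk, one_smul] at this
      rw [this]
    have h5 : Lᵀ * L - k • L - k • Lᵀ + (k * k) • 1 = (k * k) • 1 := by
      rw [← e2]; exact h4
    have h6 : Lᵀ * L = k • L + k • Lᵀ := by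
      have h5' : Lᵀ * L - k • L - k • Lᵀ = 0 := by
        have := congrArg (fun M => M - (k * k) • (1 : Matrix (Fin (n-2)) (Fin (n-2)) ℝ)) h5
        simpa using this
      rw [sub_sub] at h5'
      exact sub_eq_zero.mp h5' 
    rw [hL, h6]
end

section
/- Let L be the block-diagonal (n-2)×(n-2) matrix with p blocks L_μ = [[s_μ, a_μ],[-a_μ, s_μ]] where s_μ = r/(r²+(a⁰_μ)²), a_μ = a⁰_μ/(r²+(a⁰_μ)²), followed by a diagonal block (1/r)·diag(1,…,1,0,…,0) with m-2p ones and n-2-m zeros (r ≠ 0). Then L satisfies the optical constraint L Lᵀ = (tr(L Lᵀ)/((n-2)θ)) S where S = (L+Lᵀ)/2 and θ = tr(L)/(n-2), provided θ ≠ 0. -/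
open Matrix

/-- The canonical Kerr-Schild optical matrix: block-diagonal with `p` blocks
`[[s_μ, a_μ],[-a_μ, s_μ]]`, `s_μ = r/(r²+a_μ⁰²)`, `a_μ = a_μ⁰/(r²+a_μ⁰²)`,
followed by `(1/r)·diag(1,…,1,0,…,0)` with `m-2p` ones and `N-m` zeros. -/
noncomputable def canonicalKS (N p m : ℕ) (r : ℝ) (a : ℕ → ℝ) : Matrix (Fin N) (Fin N) ℝ :=
  Matrix.of fun i j =>
    if (i : ℕ) = (j : ℕ) then
      (if (i : ℕ) < 2 * p then r / (r ^ 2 + a ((i : ℕ) / 2) ^ 2)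
       else if (i : ℕ) < m then 1 / r else 0)
    else if (i : ℕ) % 2 = 0 ∧ (i : ℕ) < 2 * p ∧ (j : ℕ) = (i : ℕ) + 1 then
      a ((i : ℕ) / 2) / (r ^ 2 + a ((i : ℕ) / 2) ^ 2)
    else if (j : ℕ) % 2 = 0 ∧ (j : ℕ) < 2 * p ∧ (i : ℕ) = (j : ℕ) + 1 then
      -(a ((j : ℕ) / 2) / (r ^ 2 + a ((j : ℕ) / 2) ^ 2))
    else 0

namespace KSaux

variable {N p m : ℕ} {r : ℝ} {a : ℕ → ℝ}

lemma ks_zero {i j : Fin N} (h1 : (i : ℕ) ≠ (j : ℕ))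
    (h2 : ¬((i : ℕ) % 2 = 0 ∧ (i : ℕ) < 2 * p ∧ (j : ℕ) = (i : ℕ) + 1))
    (h3 : ¬((j : ℕ) % 2 = 0 ∧ (j : ℕ) < 2 * p ∧ (i : ℕ) = (j : ℕ) + 1)) :
    canonicalKS N p m r a i j = 0 := by
  simp only [canonicalKS, of_apply, if_neg h1, if_neg h2, if_neg h3]

lemma ks_diag_lt {i : Fin N} (h : (i : ℕ) < 2 * p) :
    canonicalKS N p m r a i i = r / (r ^ 2 + a ((i : ℕ) / 2) ^ 2) := by
  simp only [canonicalKS, of_apply, if_true]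
  rw [if_pos h]

lemma ks_diag_mid {i : Fin N} (h : 2 * p ≤ (i : ℕ)) (h2 : (i : ℕ) < m) :
    canonicalKS N p m r a i i = 1 / r := by
  simp only [canonicalKS, of_apply, if_true]
  rw [if_neg (show ¬ (i : ℕ) < 2 * p by omega), if_pos h2]

lemma ks_upper {i j : Fin N} (he : (i : ℕ) % 2 = 0) (hp : (i : ℕ) < 2 * p)
    (hj : (j : ℕ) = (i : ℕ) + 1) :
    canonicalKS N p m r a i j = a ((i : ℕ) / 2) / (r ^ 2 + a ((i : ℕ) / 2) ^ 2) := by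
  simp only [canonicalKS, of_apply]
  rw [if_neg (by omega), if_pos ⟨he, hp, hj⟩]

lemma ks_lower {i j : Fin N} (he : (j : ℕ) % 2 = 0) (hp : (j : ℕ) < 2 * p)
    (hi : (i : ℕ) = (j : ℕ) + 1) :
    canonicalKS N p m r a i j = -(a ((j : ℕ) / 2) / (r ^ 2 + a ((j : ℕ) / 2) ^ 2)) := by
  simp only [canonicalKS, of_apply]
  rw [if_neg (by omega), if_neg (by omega), if_pos ⟨he, hp, hi⟩]

lemma ks_row_zero (hpm : 2 * p ≤ m) {i : Fin N} (h : m ≤ (i : ℕ)) (j : Fin N) :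
    canonicalKS N p m r a i j = 0 := by
  simp only [canonicalKS, of_apply]
  split_ifs <;> first | rfl | omega

lemma ks_col_zero (hpm : 2 * p ≤ m) {i : Fin N} (h : m ≤ (i : ℕ)) (j : Fin N) :
    canonicalKS N p m r a j i = 0 := by
  simp only [canonicalKS, of_apply]
  split_ifs <;> first | rfl | omega

lemma key (hpm : 2 * p ≤ m) (hmN : m ≤ N) (hr : r ≠ 0) (i j : Fin N) :
    ∑ k, canonicalKS N p m r a i k * canonicalKS N p m r a j k =
      (1 / (2 * r)) * (canonicalKS N p m r a i j + canonicalKS N p m r a j i) := by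
  rcases Nat.lt_or_ge (i : ℕ) (2 * p) with hi | hi
  · by_cases hpar : (i : ℕ) % 2 = 0
    · -- i even, i < 2p; support {i, i+1}
      have hi1N : (i : ℕ) + 1 < N := by omega
      set i1 : Fin N := ⟨(i : ℕ) + 1, hi1N⟩ with hi1def
      have hii1 : (i1 : ℕ) = (i : ℕ) + 1 := rfl
      have hne : i ≠ i1 := by
        intro h; apply_fun (Fin.val) at h; omega
      have hR : (0:ℝ) < r ^ 2 + a ((i : ℕ) / 2) ^ 2 := by positivity
      rw [Fintype.sum_eq_add i i1 hne ?_]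
      swap
      · rintro k ⟨hk, hk1⟩
        have hkv : (k : ℕ) ≠ (i : ℕ) := fun h => hk (Fin.ext h)
        have hkv1 : (k : ℕ) ≠ (i : ℕ) + 1 := fun h => hk1 (Fin.ext h)
        rw [ks_zero (by omega) (by omega) (by omega), zero_mul]
      rw [ks_diag_lt hi, ks_upper hpar hi hii1]
      by_cases hji : j = i
      · subst hji
        rw [ks_diag_lt hi, ks_upper hpar hi hii1]
        field_simp
        ring
      · have hji' : (j : ℕ) ≠ (i : ℕ) := fun h => hji (Fin.ext h)
        by_cases hji1 : j = i1
        · subst hji1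
          rw [ks_lower hpar hi hii1, ks_upper hpar hi hii1,
            ks_diag_lt (show (i1 : ℕ) < 2 * p by omega)]
          have hdiv : (i1 : ℕ) / 2 = (i : ℕ) / 2 := by omega
          rw [hdiv]
          ring
        · have hji1' : (j : ℕ) ≠ (i : ℕ) + 1 := fun h => hji1 (Fin.ext h)
          have z1 : canonicalKS N p m r a j i = 0 :=
            ks_zero (by omega) (by omega) (by omega)
          have z2 : canonicalKS N p m r a j i1 = 0 :=
            ks_zero (by omega) (by omega) (by omega)
          have z3 : canonicalKS N p m r a i j = 0 :=
            ks_zero (by omega) (by omega) (by omega)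
          rw [z1, z2, z3]
          ring
    · -- i odd, i < 2p; support {i-1, i}
      have hbN : (i : ℕ) - 1 < N := by omega
      set b : Fin N := ⟨(i : ℕ) - 1, hbN⟩ with hbdef
      have hbb : (b : ℕ) = (i : ℕ) - 1 := rfl
      have hib : (i : ℕ) = (b : ℕ) + 1 := by omega
      have hbe : (b : ℕ) % 2 = 0 := by omega
      have hbp : (b : ℕ) < 2 * p := by omega
      have hne : b ≠ i := by
        intro h; apply_fun (Fin.val) at h; omega
      have hdiv : (i : ℕ) / 2 = (b : ℕ) / 2 := by omega
      have hR : (0:ℝ) < r ^ 2 + a ((b : ℕ) / 2) ^ 2 := by positivity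
      rw [Fintype.sum_eq_add b i hne ?_]
      swap
      · rintro k ⟨hkb, hki⟩
        have hkv : (k : ℕ) ≠ (b : ℕ) := fun h => hkb (Fin.ext h)
        have hkv1 : (k : ℕ) ≠ (i : ℕ) := fun h => hki (Fin.ext h)
        rw [ks_zero (by omega) (by omega) (by omega), zero_mul]
      rw [ks_lower hbe hbp hib, ks_diag_lt hi, hdiv]
      by_cases hjb : j = b
      · subst hjb
        rw [ks_diag_lt hbp, ks_upper hbe hbp hib, ks_lower hbe hbp hib]
        ring
      · have hjb' : (j : ℕ) ≠ (b : ℕ) := fun h => hjb (Fin.ext h)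
        by_cases hji : j = i
        · subst hji
          rw [ks_lower hbe hbp hib, ks_diag_lt hi, hdiv]
          field_simp
          ring
        · have hji' : (j : ℕ) ≠ (i : ℕ) := fun h => hji (Fin.ext h)
          have z1 : canonicalKS N p m r a j b = 0 :=
            ks_zero (by omega) (by omega) (by omega)
          have z2 : canonicalKS N p m r a j i = 0 :=
            ks_zero (by omega) (by omega) (by omega)
          have z3 : canonicalKS N p m r a i j = 0 :=
            ks_zero (by omega) (by omega) (by omega)
          rw [z1, z2, z3]
          ring
  · by_cases him : (i : ℕ) < m
    · -- middle block: support {i}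
      rw [Fintype.sum_eq_single i ?_]
      swap
      · intro k hk
        have hkv : (k : ℕ) ≠ (i : ℕ) := fun h => hk (Fin.ext h)
        rw [ks_zero (by omega) (by omega) (by omega), zero_mul]
      rw [ks_diag_mid hi him]
      by_cases hji : j = i
      · subst hji
        rw [ks_diag_mid hi him]
        field_simp
        ring
      · have hji' : (j : ℕ) ≠ (i : ℕ) := fun h => hji (Fin.ext h)
        have z1 : canonicalKS N p m r a j i = 0 :=
          ks_zero (by omega) (by omega) (by omega)
        have z2 : canonicalKS N p m r a i j = 0 :=
          ks_zero (by omega) (by omega) (by omega)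
        rw [z1, z2]
        ring
    · -- zero block
      have him' : m ≤ (i : ℕ) := by omega
      rw [ks_row_zero hpm him' j, ks_col_zero hpm him' j]
      simp [ks_row_zero hpm him']

lemma matrix_key (hpm : 2 * p ≤ m) (hmN : m ≤ N) (hr : r ≠ 0) :
    canonicalKS N p m r a * (canonicalKS N p m r a)ᵀ =
      (1 / (2 * r)) • (canonicalKS N p m r a + (canonicalKS N p m r a)ᵀ) := by
  ext i j
  rw [mul_apply]
  simp only [transpose_apply, Matrix.smul_apply, Matrix.add_apply, smul_eq_mul]
  exact key hpm hmN hr i j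

end KSaux

/-- The canonical Kerr-Schild matrix `L` satisfies the optical
constraint `L Lᵀ = (tr(L Lᵀ)/((n-2)θ)) • S` with `S = (L+Lᵀ)/2`,
`θ = tr L/(n-2) ≠ 0`. -/
theorem canonicalKS_satisfies_optical_constraint {n p m : ℕ} (hn : 4 ≤ n)
    (hpm : 2 * p ≤ m) (hm2 : 2 ≤ m) (hmn : m ≤ n - 2)
    (r : ℝ) (hr : r ≠ 0) (a : ℕ → ℝ)
    (L : Matrix (Fin (n - 2)) (Fin (n - 2)) ℝ) (hL : L = canonicalKS (n - 2) p m r a)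
    (θ : ℝ) (hθdef : θ = Matrix.trace L / ((n : ℝ) - 2)) (hθ : θ ≠ 0)
    (S : Matrix (Fin (n - 2)) (Fin (n - 2)) ℝ) (hS : S = (1 / 2 : ℝ) • (L + Lᵀ)) :
    L * Lᵀ = (Matrix.trace (L * Lᵀ) / (((n : ℝ) - 2) * θ)) • S := by
  have hM : L * Lᵀ = (1 / (2 * r)) • (L + Lᵀ) := by
    rw [hL]; exact KSaux.matrix_key hpm hmn hr
  have hn2 : ((n : ℝ) - 2) ≠ 0 := by
    have : (4 : ℝ) ≤ (n : ℝ) := by exact_mod_cast hn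
    linarith
  have hT : Matrix.trace L ≠ 0 := by
    intro h
    apply hθ
    rw [hθdef, h, zero_div]
  have htr : Matrix.trace (L * Lᵀ) = (1 / r) * Matrix.trace L := by
    rw [hM, trace_smul, trace_add, trace_transpose, smul_eq_mul]
    ring
  have hc : Matrix.trace (L * Lᵀ) / (((n : ℝ) - 2) * θ) = 1 / r := by
    rw [htr, hθdef]
    field_simp
  rw [hc, hS, smul_smul, hM]
  congr 1
  ring
end

section
/- If L is a real m×m matrix satisfying L Lᵀ = c S with S = (L+Lᵀ)/2 and c ∈ ℝ, then every eigenvalue λ = x + iy ∈ ℂ of L (viewed as a complex matrix) satisfies |λ|² = c·x, i.e. the eigenvalues of L lie on the circle in the complex plane of radius c/2 centered at c/2. -/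
open Matrix

/-- If a real `m×m` matrix satisfies `L Lᵀ = c • S` with
`S = (L+Lᵀ)/2`, then every complex eigenvalue `λ` of `L` satisfies
`|λ|² = c·Re λ`, i.e. the eigenvalues lie on the circle of radius `c/2`
centered at `c/2`. -/
theorem optical_constraint_eigenvalue_circle {m : ℕ}
    (L S : Matrix (Fin m) (Fin m) ℝ) (hS : S = (1 / 2 : ℝ) • (L + Lᵀ))
    (c : ℝ) (hopt : L * Lᵀ = c • S) :
    ∀ lam : ℂ, lam ∈ spectrum ℂ (L.map (Complex.ofReal)) →
      Complex.normSq lam = c * lam.re := by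
  intro lam hlam
  subst hS
  have hopt' : L * Lᵀ = (c/2) • (L + Lᵀ) := by
    rw [hopt, smul_smul]; ring_nf
  set N : Matrix (Fin m) (Fin m) ℝ := L - (c/2) • 1 with hNdef
  have hNT : Nᵀ = Lᵀ - (c/2) • 1 := by
    simp [hNdef, transpose_smul]
  have hN : N * Nᵀ = (c^2/4) • 1 := by
    have expand : N * Nᵀ = L * Lᵀ - (c/2) • L - (c/2) • Lᵀ + (c^2/4) • 1 := by
      rw [hNdef, hNT]
      simp only [sub_mul, mul_sub, smul_mul_assoc, mul_smul_comm, smul_smul, one_mul, mul_one]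
      module
    rw [expand, hopt']; module
  have e1 : Nᵀ * N = Lᵀ * L - (c/2) • (L + Lᵀ) + (c^2/4) • 1 := by
    rw [hNdef, hNT]
    simp only [sub_mul, mul_sub, smul_mul_assoc, mul_smul_comm, smul_smul, one_mul, mul_one]
    module
  have hN' : Nᵀ * N = (c^2/4) • 1 := by
    rcases eq_or_ne c 0 with hc | hc
    · have h0 : N * Nᵀ = 0 := by rw [hN, hc]; simp
      have hNz : N = 0 := by
        have h1 : (Nᵀ)ᴴ * Nᵀ = 0 := by
          rwa [show (Nᵀ)ᴴ = N by ext i j; simp [conjTranspose_apply]]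
        have h2 := Matrix.conjTranspose_mul_self_eq_zero.mp h1
        simpa using congrArg transpose h2
      rw [hNz, hc]; simp
    · have hc4 : (c^2/4 : ℝ) ≠ 0 := by positivity
      have h1 : N * ((c^2/4)⁻¹ • Nᵀ) = 1 := by
        rw [mul_smul_comm, hN, smul_smul, inv_mul_cancel₀ hc4, one_smul]
      have h2 : ((c^2/4)⁻¹ • Nᵀ) * N = 1 := mul_eq_one_comm.mp h1
      calc Nᵀ * N = (c^2/4) • (((c^2/4)⁻¹ • Nᵀ) * N) := by
            rw [smul_mul_assoc, smul_smul, mul_inv_cancel₀ hc4, one_smul]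
        _ = (c^2/4) • 1 := by rw [h2]
  have hcomm : Lᵀ * L = L * Lᵀ := by
    have h := e1.symm.trans hN'
    have h2 : Lᵀ * L - (c/2) • (L + Lᵀ) = 0 := add_eq_right.mp h
    rw [sub_eq_zero.mp h2, hopt']
  -- Move to ℂ
  set M : Matrix (Fin m) (Fin m) ℂ := L.map Complex.ofReal with hMdef
  have hMH : Mᴴ = Lᵀ.map Complex.ofReal := by
    ext i j; simp [hMdef, conjTranspose_apply]
  have hmul : ∀ A B : Matrix (Fin m) (Fin m) ℝ,
      (A * B).map Complex.ofReal = A.map Complex.ofReal * B.map Complex.ofReal := by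
    intro A B
    exact Matrix.map_mul (f := Complex.ofRealHom)
  have hnormal : Mᴴ * M = M * Mᴴ := by
    rw [hMH, hMdef, ← hmul, ← hmul, hcomm]
  have hoptC : M * Mᴴ = ((c : ℂ)/2) • (M + Mᴴ) := by
    rw [hMH, hMdef, ← hmul, hopt']
    ext i j
    simp [Matrix.smul_apply, Matrix.add_apply]
    ring
  -- eigenvector
  rw [spectrum.mem_iff, Matrix.isUnit_iff_isUnit_det, isUnit_iff_ne_zero, not_not] at hlam
  obtain ⟨v, hv0, hv⟩ := Matrix.exists_mulVec_eq_zero_iff.mpr hlam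
  have hev : M *ᵥ v = lam • v := by
    have h1 : (algebraMap ℂ (Matrix (Fin m) (Fin m) ℂ)) lam *ᵥ v - M *ᵥ v = 0 := by
      rw [← Matrix.sub_mulVec]; exact hv
    rw [Algebra.algebraMap_eq_smul_one, Matrix.smul_mulVec, Matrix.one_mulVec] at h1
    exact (sub_eq_zero.mp h1).symm
  set n : ℂ := star v ⬝ᵥ v with hndef
  have hn : n ≠ 0 := by
    open ComplexOrder in
    exact fun h => hv0 (dotProduct_star_self_eq_zero.mp h)
  have hevH : star v ⬝ᵥ (Mᴴ *ᵥ v) = (starRingEnd ℂ) lam * n := by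
    rw [Matrix.dotProduct_mulVec, ← Matrix.star_mulVec, hev]
    simp [hndef, smul_dotProduct, star_smul, smul_eq_mul]
  have hevM : star v ⬝ᵥ (M *ᵥ v) = lam * n := by
    rw [hev]; simp [hndef, smul_eq_mul]
  have key : lam * (starRingEnd ℂ) lam * n = ((c:ℂ)/2) * ((lam + (starRingEnd ℂ) lam) * n) := by
    have lhs : star v ⬝ᵥ ((M * Mᴴ) *ᵥ v) = lam * (starRingEnd ℂ) lam * n := by
      rw [← hnormal, ← Matrix.mulVec_mulVec, hev, Matrix.mulVec_smul,
        dotProduct_smul, hevH, smul_eq_mul]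
      ring
    have rhs : star v ⬝ᵥ ((M * Mᴴ) *ᵥ v) = ((c:ℂ)/2) * ((lam + (starRingEnd ℂ) lam) * n) := by
      rw [hoptC, Matrix.smul_mulVec, dotProduct_smul, Matrix.add_mulVec,
        dotProduct_add, hevM, hevH, smul_eq_mul]
      ring
    rw [← lhs, rhs]
  have key2 : lam * (starRingEnd ℂ) lam = ((c:ℂ)/2) * (lam + (starRingEnd ℂ) lam) := by
    have := mul_right_cancel₀ hn (by linear_combination key :
      lam * (starRingEnd ℂ) lam * n = (((c:ℂ)/2) * (lam + (starRingEnd ℂ) lam)) * n)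
    exact this
  have : (Complex.normSq lam : ℂ) = ((c * lam.re : ℝ) : ℂ) := by
    rw [← Complex.mul_conj, key2]
    rw [Complex.add_conj]
    push_cast
    ring
  exact_mod_cast this
end
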